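/- Let A be an n×n real symmetric matrix, Q an n×n real orthogonal matrix, V the positive-definite square root of I + A², and y₁,…,yₙ independent square-integrable real random variables with common variance σ. Define N_j = Σ_{p=1}^{n} (V*Q)_{j p} · y_p. If σ < |A i j| / (2 + Σ_{k=1}^{n} (A k i)² + Σ_{l=1}^{n} (A l j)²) for a pair of indices i, j with A i j ≠ 0, then Var(N_i) + Var(N_j) < |A i j|. -/

import Mathlib

open Matrix Finset MeasureTheory ProbabilityTheory

/-! Independence gives `Var(N_r) = σ · ∑ₚ (VQ)ᵣₚ²`, and the squared row norm is the diagonal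
entry `((VQ)(VQ)ᵀ)ᵣᵣ = (V²)ᵣᵣ = 1 + ∑ₖ Aₖᵣ²` because `Q` is orthogonal and `V`, `A` are
symmetric. Hence `Var(N_i) + Var(N_j) = σ (2 + ∑ₖ Aₖᵢ² + ∑ₗ Aₗⱼ²)`, which is below `|A i j|`
exactly by the squeezing hypothesis. -/

theorem ProbabilityTheory.iIndepFun.variance_fun_sum_mul {ι Ω : Type*} [Fintype ι]
    {mΩ : MeasurableSpace Ω} {μ : Measure Ω} {X : ι → Ω → ℝ}
    (hX : ∀ i, MemLp (X i) 2 μ) (hindep : iIndepFun X μ) (c : ι → ℝ) :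
    variance (fun ω => ∑ i, c i * X i ω) μ = ∑ i, c i ^ 2 * variance (X i) μ := by
  rw [← Finset.sum_fn, IndepFun.variance_sum (fun i _ => (hX i).const_mul (c i))]
  · simp only [variance_const_mul]
  · intro i _ j _ hij
    exact (hindep.indepFun hij).comp (measurable_const_mul (c i)) (measurable_const_mul (c j))

namespace Matrix

variable {m n R : Type*} [Fintype n] [CommSemiring R]

theorem mul_transpose_self_apply_self (M : Matrix m n R) (r : m) :
    (M * Mᵀ) r r = ∑ p, M r p ^ 2 := by
  simp only [mul_apply, transpose_apply, sq]

theorem mul_mul_transpose_of_mul_transpose_eq_one [DecidableEq n] {M : Matrix m n R} {Q : Matrix n n R}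
    (hQ : Q * Qᵀ = 1) :
    (M * Q) * (M * Q)ᵀ = M * Mᵀ := by
  rw [transpose_mul, Matrix.mul_assoc, ← Matrix.mul_assoc Q, hQ, Matrix.one_mul]

theorem IsSymm.mul_self_apply_self {A : Matrix n n R} (hA : A.IsSymm) (r : n) :
    (A * A) r r = ∑ k, A k r ^ 2 := by
  simp only [mul_apply, sq, hA.apply r]

end Matrix

theorem nullifier_variance_inseparability_general {n : ℕ} {Ω : Type*} [MeasureSpace Ω]
    (A Q V : Matrix (Fin n) (Fin n) ℝ)
    (hA : A.IsSymm)
    (hQ : Q * Qᵀ = 1)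
    (hV : V.PosDef) (hV2 : V * V = 1 + A * A)
    (y : Fin n → Ω → ℝ) (σ : ℝ)
    (hL2 : ∀ i, MemLp (y i) 2 ℙ)
    (hindep : iIndepFun y ℙ)
    (hvar : ∀ i, variance (y i) ℙ = σ)
    (i j : Fin n)
    (hcrit : σ < |A i j| / (2 + ∑ k, (A k i) ^ 2 + ∑ l, (A l j) ^ 2)) :
    variance (fun ω => ∑ p, (V * Q) i p * y p ω) ℙ
      + variance (fun ω => ∑ p, (V * Q) j p * y p ω) ℙ < |A i j| := by
  have hVsymm : Vᵀ = V := hV.isHermitian.eq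
  have hrow : ∀ r, ∑ p, (V * Q) r p ^ 2 = 1 + ∑ k, A k r ^ 2 := fun r => by
    rw [← mul_transpose_self_apply_self, mul_mul_transpose_of_mul_transpose_eq_one hQ,
      hVsymm, hV2, Matrix.add_apply, one_apply_eq, hA.mul_self_apply_self]
  have hvarN : ∀ r, variance (fun ω => ∑ p, (V * Q) r p * y p ω) ℙ
      = σ * (1 + ∑ k, A k r ^ 2) := fun r => by
    rw [hindep.variance_fun_sum_mul hL2]
    simp only [hvar]
    rw [← sum_mul, hrow, mul_comm]
  have hden : 0 < 2 + ∑ k, A k i ^ 2 + ∑ l, A l j ^ 2 := by positivity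
  rw [hvarN, hvarN]
  rw [lt_div_iff₀ hden] at hcrit
  linarith

/-- Corollary 2 of the paper: if the common variance `σ` of the
independent squeezed oscillators satisfies the minimum-squeezing criterion for
an adjacent pair `(i, j)` (i.e. `A i j ≠ 0`), then the variances of the
corresponding nullifiers violate the van Loock–Furusawa separability bound. -/
theorem nullifier_variance_inseparability {n : ℕ} {Ω : Type*} [MeasureSpace Ω]
    [IsProbabilityMeasure (ℙ : Measure Ω)]
    (A Q V : Matrix (Fin n) (Fin n) ℝ)
    (hA : A.IsSymm)
    (hQ : Q * Qᵀ = 1) (hQ' : Qᵀ * Q = 1)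
    (hV : V.PosDef) (hV2 : V * V = 1 + A * A)
    (y : Fin n → Ω → ℝ) (σ : ℝ) (hσ : 0 ≤ σ)
    (hmeas : ∀ i, Measurable (y i))
    (hL2 : ∀ i, MemLp (y i) 2 ℙ)
    (hindep : iIndepFun y ℙ)
    (hvar : ∀ i, variance (y i) ℙ = σ)
    (i j : Fin n) (hadj : A i j ≠ 0)
    (hcrit : σ < |A i j| / (2 + ∑ k, (A k i) ^ 2 + ∑ l, (A l j) ^ 2)) :
    variance (fun ω => ∑ p, (V * Q) i p * y p ω) ℙ
      + variance (fun ω => ∑ p, (V * Q) j p * y p ω) ℙ < |A i j| :=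
  nullifier_variance_inseparability_general A Q V hA hQ hV hV2 y σ hL2 hindep hvar i j hcrit
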